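/- The following two conditions are equivalent: (i) for every gear j ∈ {1,…,6} and every v ∈ Ω(j) there exist u₁ ∈ [T_min, T_max] and u₂ ∈ [F_b,min, F_b,max] with u₁·z(j)·z_f/r − C·v² − u₂ − G = 0; (ii) for every gear j ∈ {1,…,6} and for each of the two values v ∈ {π·ω_min·r/(30·z(j)·z_f), π·ω_max·r/(30·z(j)·z_f)} (the endpoints of Ω(j)), there exist u₁ ∈ [T_min, T_max] and u₂ ∈ [F_b,min, F_b,max] with u₁·z(j)·z_f/r − C·v² − u₂ − G = 0. In particular, verifying condition (i) requires checking only 6 × 2 conditions. -/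

import Mathlib

/-- Vehicle parameters. -/
structure VehicleParams where
  C : ℝ        -- wind drag coefficient
  G : ℝ        -- constant road friction force
  r : ℝ        -- wheel radius
  zf : ℝ       -- final drive ratio
  z : ℤ → ℝ    -- gear ratios (used on gears 1,…,6)
  ωmin : ℝ     -- engine speed lower bound
  ωmax : ℝ     -- engine speed upper bound
  Tmin : ℝ     -- torque lower bound
  Tmax : ℝ     -- torque upper bound
  Fbmin : ℝ    -- brake force lower bound
  Fbmax : ℝ    -- brake force upper bound

/-- Engine speed ω(v, j) = 30·v·z(j)·z_f/(r·π). -/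
noncomputable def engSpeed (P : VehicleParams) (v : ℝ) (j : ℤ) : ℝ :=
  30 * v * P.z j * P.zf / (P.r * Real.pi)

/-- Feasible gear set Φ(v) = {j ∈ {1,…,6} : ω_min ≤ ω(v, j) ≤ ω_max}. -/
noncomputable def Phi (P : VehicleParams) (v : ℝ) : Set ℤ :=
  {j | 1 ≤ j ∧ j ≤ 6 ∧ P.ωmin ≤ engSpeed P v j ∧ engSpeed P v j ≤ P.ωmax}

/-- Ω(j) = {v ∈ ℝ : j ∈ Φ(v)}. -/
noncomputable def OmegaSet (P : VehicleParams) (j : ℤ) : Set ℝ := {v | j ∈ Phi P v}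

/-! In gear `j` the achievable net forces `u₁·z(j)·z_f/r - u₂` form an interval, the image of the
control box under a linear map, and the force `C·v² + G` to be balanced is affine in `v²`. Since
`Ω(j)` is an interval `[v₋, v₊] ⊆ [0, ∞)`, `v²` runs over `[v₋², v₊²]`, so whatever the sign of `C`
the required force lies between its values at the two endpoints, hence in the interval as soon as
those two values are. -/

open Set

lemma antitoneOn_gear_ratio (P : VehicleParams)
    (hzmono : ∀ j : ℤ, 1 ≤ j → j ≤ 5 → P.z (j + 1) ≤ P.z j) : AntitoneOn P.z (Icc 1 6) :=
  antitoneOn_of_succ_le ordConnected_Icc fun j _ hj hj' => by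
    rw [Order.succ_eq_add_one] at hj' ⊢
    exact hzmono j hj.1 (by linarith [hj'.2])

lemma gear_ratio_pos (P : VehicleParams) (hz6 : 0 < P.z 6)
    (hzmono : ∀ j : ℤ, 1 ≤ j → j ≤ 5 → P.z (j + 1) ≤ P.z j) {j : ℤ} (hj1 : 1 ≤ j) (hj6 : j ≤ 6) :
    0 < P.z j :=
  hz6.trans_le <| antitoneOn_gear_ratio P hzmono ⟨hj1, hj6⟩ ⟨by norm_num, le_rfl⟩ hj6

lemma omegaSet_eq_Icc (P : VehicleParams) (hr : 0 < P.r) (hzf : 0 < P.zf) {j : ℤ}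
    (hj1 : 1 ≤ j) (hj6 : j ≤ 6) (hz : 0 < P.z j) :
    OmegaSet P j = Icc (Real.pi * P.ωmin * P.r / (30 * P.z j * P.zf))
      (Real.pi * P.ωmax * P.r / (30 * P.z j * P.zf)) := by
  set k := 30 * P.z j * P.zf / (P.r * Real.pi)
  have hk : 0 < k := by positivity
  have hspeed (v : ℝ) : engSpeed P v j = v * k := by
    simp only [engSpeed, k]; ring
  have hbound (ω : ℝ) : Real.pi * ω * P.r / (30 * P.z j * P.zf) = ω / k := by
    simp only [k]; field_simp
  ext v
  simp only [OmegaSet, Phi, mem_ofPred_eq, hj1, hj6, true_and, hspeed, hbound, mem_Icc,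
    div_le_iff₀ hk, le_div_iff₀ hk]

def netForces (P : VehicleParams) (j : ℤ) : Set ℝ :=
  (fun u : ℝ × ℝ => u.1 * P.z j * P.zf / P.r - u.2) '' Icc P.Tmin P.Tmax ×ˢ Icc P.Fbmin P.Fbmax

lemma ordConnected_netForces (P : VehicleParams) (j : ℤ) : (netForces P j).OrdConnected := by
  refine Convex.ordConnected <| ((convex_Icc _ _).prod (convex_Icc _ _)).is_linear_image ?_
  constructor <;> intros <;> simp only [Prod.fst_add, Prod.snd_add, Prod.smul_fst,
    Prod.smul_snd, smul_eq_mul] <;> ring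

lemma exists_balance_iff_mem_netForces (P : VehicleParams) (j : ℤ) (v : ℝ) :
    (∃ u1 u2 : ℝ, P.Tmin ≤ u1 ∧ u1 ≤ P.Tmax ∧ P.Fbmin ≤ u2 ∧ u2 ≤ P.Fbmax ∧
        u1 * P.z j * P.zf / P.r - P.C * v ^ 2 - u2 - P.G = 0) ↔
      P.C * v ^ 2 + P.G ∈ netForces P j := by
  simp only [netForces, mem_image, mem_prod, mem_Icc, Prod.exists, and_assoc]
  refine exists₂_congr fun u1 u2 => ?_
  constructor <;> rintro ⟨h1, h2, h3, h4, h⟩ <;> exact ⟨h1, h2, h3, h4, by linarith⟩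

lemma affine_mem_uIcc {c d p q t : ℝ} (ht : t ∈ uIcc p q) :
    c * t + d ∈ uIcc (c * p + d) (c * q + d) := by
  rw [← image_add_const_uIcc, ← image_const_mul_uIcc]
  exact ⟨c * t, ⟨t, ht, rfl⟩, rfl⟩

lemma forall_mem_Icc_iff_endpoints {S : Set ℝ} (hS : S.OrdConnected) {c d a b : ℝ}
    (ha : 0 ≤ a) (hab : a ≤ b) :
    (∀ v ∈ Icc a b, c * v ^ 2 + d ∈ S) ↔ ∀ v ∈ ({a, b} : Set ℝ), c * v ^ 2 + d ∈ S := by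
  refine ⟨fun h v hv => h v ?_, fun h v hv => ?_⟩
  · rcases hv with rfl | rfl
    exacts [left_mem_Icc.2 hab, right_mem_Icc.2 hab]
  · have hsq : v ^ 2 ∈ uIcc (a ^ 2) (b ^ 2) := Icc_subset_uIcc
      ⟨pow_le_pow_left₀ ha hv.1 2, pow_le_pow_left₀ (ha.trans hv.1) hv.2 2⟩
    exact hS.uIcc_subset (h a (by simp)) (h b (by simp)) (affine_mem_uIcc hsq)

theorem force_balance_endpoints_iff_general
    (P : VehicleParams)
    (hr : 0 < P.r) (hzf : 0 < P.zf)
    (hz6 : 0 < P.z 6) (hzmono : ∀ j : ℤ, 1 ≤ j → j ≤ 5 → P.z (j + 1) ≤ P.z j)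
    (hωmin : 0 < P.ωmin) (hωle : P.ωmin ≤ P.ωmax) :
    (∀ j : ℤ, 1 ≤ j → j ≤ 6 → ∀ v : ℝ, v ∈ OmegaSet P j →
      ∃ u1 u2 : ℝ, P.Tmin ≤ u1 ∧ u1 ≤ P.Tmax ∧ P.Fbmin ≤ u2 ∧ u2 ≤ P.Fbmax ∧
        u1 * P.z j * P.zf / P.r - P.C * v ^ 2 - u2 - P.G = 0) ↔
    (∀ j : ℤ, 1 ≤ j → j ≤ 6 →
      ∀ v ∈ ({Real.pi * P.ωmin * P.r / (30 * P.z j * P.zf),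
              Real.pi * P.ωmax * P.r / (30 * P.z j * P.zf)} : Set ℝ),
      ∃ u1 u2 : ℝ, P.Tmin ≤ u1 ∧ u1 ≤ P.Tmax ∧ P.Fbmin ≤ u2 ∧ u2 ≤ P.Fbmax ∧
        u1 * P.z j * P.zf / P.r - P.C * v ^ 2 - u2 - P.G = 0) := by
  simp only [exists_balance_iff_mem_netForces]
  refine forall_congr' fun j => imp_congr_right fun hj1 => imp_congr_right fun hj6 => ?_
  have hz := gear_ratio_pos P hz6 hzmono hj1 hj6
  rw [omegaSet_eq_Icc P hr hzf hj1 hj6 hz]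
  exact forall_mem_Icc_iff_endpoints (ordConnected_netForces P j) (by positivity) (by gcongr)

/-- The force-balance assumption holds for all `j ∈ {1,…,6}` and all `v ∈ Ω(j)` if and only
if it holds for the two endpoints `v = π·ω_min·r/(30·z(j)·z_f)` and
`v = π·ω_max·r/(30·z(j)·z_f)` of `Ω(j)`, for each `j ∈ {1,…,6}`: verifying the assumption
requires checking only 6 × 2 conditions. -/
theorem force_balance_endpoints_iff
    (P : VehicleParams)
    (hC : 0 < P.C) (hr : 0 < P.r) (hzf : 0 < P.zf)
    (hz6 : 0 < P.z 6) (hzmono : ∀ j : ℤ, 1 ≤ j → j ≤ 5 → P.z (j + 1) ≤ P.z j)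
    (hωmin : 0 < P.ωmin) (hωle : P.ωmin ≤ P.ωmax)
    (hT : P.Tmin ≤ P.Tmax) (hFb : P.Fbmin ≤ P.Fbmax) :
    (∀ j : ℤ, 1 ≤ j → j ≤ 6 → ∀ v : ℝ, v ∈ OmegaSet P j →
      ∃ u1 u2 : ℝ, P.Tmin ≤ u1 ∧ u1 ≤ P.Tmax ∧ P.Fbmin ≤ u2 ∧ u2 ≤ P.Fbmax ∧
        u1 * P.z j * P.zf / P.r - P.C * v ^ 2 - u2 - P.G = 0) ↔
    (∀ j : ℤ, 1 ≤ j → j ≤ 6 →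
      ∀ v ∈ ({Real.pi * P.ωmin * P.r / (30 * P.z j * P.zf),
              Real.pi * P.ωmax * P.r / (30 * P.z j * P.zf)} : Set ℝ),
      ∃ u1 u2 : ℝ, P.Tmin ≤ u1 ∧ u1 ≤ P.Tmax ∧ P.Fbmin ≤ u2 ∧ u2 ≤ P.Fbmax ∧
        u1 * P.z j * P.zf / P.r - P.C * v ^ 2 - u2 - P.G = 0) :=
  force_balance_endpoints_iff_general P hr hzf hz6 hzmono hωmin hωle
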